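/- Define t*_n(ε) = sup{t > 0 : P^n(B_{n,t}^c) ≤ ε} where B_{n,t} = {x_1^n : P^n(x_1^n)/Q^n(x_1^n) > e^{nt}}. Then for any ε ∈ (0,1), t*_n(ε) ≥ D(P‖Q) - C_X(P,Q)·√(2 log(1/ε)/n). -/

import Mathlib

open Finset Filter Real
open scoped BigOperators Classical ENNReal

/-- The n-fold product (i.i.d.) probability mass function on `Fin n → X`. -/
noncomputable def prodP {X : Type*} [Fintype X] (P : X → ℝ) (n : ℕ) (x : Fin n → X) : ℝ :=
  ∏ i, P (x i)

/-- Kullback–Leibler divergence (natural logarithm). -/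
noncomputable def KL {X : Type*} [Fintype X] (P Q : X → ℝ) : ℝ :=
  ∑ x, P x * Real.log (P x / Q x)

/-- `C_X(P,Q) = sup_{x : P(x) > 0} |log (P(x)/Q(x))|`. -/
noncomputable def Cx {X : Type*} [Fintype X] (P Q : X → ℝ) : ℝ :=
  ⨆ x : {x : X // 0 < P x}, |Real.log (P x.1 / Q x.1)|

/-- Minimal Type II error probability under a Type I error constraint `ε`. -/
noncomputable def beta {X : Type*} [Fintype X] [DecidableEq X] (P Q : X → ℝ) (n : ℕ)
    (ε : ℝ) : ℝ :=
  sInf {b : ℝ | ∃ A : Finset (Fin n → X),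
    (∑ x ∈ Aᶜ, prodP P n x) ≤ ε ∧ b = ∑ x ∈ A, prodP Q n x}

/-!
Under `P^n` the log-likelihood ratio `log (P^n x / Q^n x)` is the sum of the `n` independent
variables `Z(x i) = log (P (x i) / Q (x i))`, each of mean `D(P‖Q)` and with `|Z| ≤ C` on the
support of `P`. Off `B_{n,t}` that sum is at most `n t`, i.e. it falls `n (D - t)` below its mean,
so for `t = D - C δ` Hoeffding's inequality gives `P^n(B_{n,t}^c) ≤ exp (-n δ² / 2) = ε`, and `t`
belongs to the set whose supremum is taken. That set is bounded by `C`, since `B_{n,t}` is empty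
for `t ≥ C`.
-/

open MeasureTheory ProbabilityTheory

section DiscreteMeasure

variable {X : Type*} [Fintype X] [MeasurableSpace X] {P : X → ℝ}

noncomputable def discreteMeasure (P : X → ℝ) : Measure X :=
  ∑ x, ENNReal.ofReal (P x) • Measure.dirac x

lemma isProbabilityMeasure_discreteMeasure (hP0 : ∀ x, 0 ≤ P x) (hP1 : ∑ x, P x = 1) :
    IsProbabilityMeasure (discreteMeasure P) := by
  constructor
  simp [discreteMeasure, ← ENNReal.ofReal_sum_of_nonneg fun x _ => hP0 x, hP1]

variable [DiscreteMeasurableSpace X]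

lemma discreteMeasure_singleton (P : X → ℝ) (y : X) :
    discreteMeasure P {y} = ENNReal.ofReal (P y) := by
  classical
  simp [discreteMeasure, Set.indicator_apply]

lemma discreteMeasure_real_singleton (hP0 : ∀ x, 0 ≤ P x) (y : X) :
    (discreteMeasure P).real {y} = P y := by
  rw [measureReal_def, discreteMeasure_singleton, ENNReal.toReal_ofReal (hP0 y)]

lemma integral_discreteMeasure (hP0 : ∀ x, 0 ≤ P x) (hP1 : ∑ x, P x = 1) (f : X → ℝ) :
    ∫ x, f x ∂discreteMeasure P = ∑ x, P x * f x := by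
  have := isProbabilityMeasure_discreteMeasure hP0 hP1
  simp [integral_fintype .of_finite, discreteMeasure_real_singleton hP0]

lemma ae_discreteMeasure_iff (hP0 : ∀ x, 0 ≤ P x) {p : X → Prop} :
    (∀ᵐ x ∂discreteMeasure P, p x) ↔ ∀ x, 0 < P x → p x := by
  simp [ae_iff_of_countable, discreteMeasure_singleton, (hP0 _).lt_iff_ne']

lemma pi_discreteMeasure_real_finset (hP0 : ∀ x, 0 ≤ P x) (hP1 : ∑ x, P x = 1) {n : ℕ}
    (S : Finset (Fin n → X)) :
    (Measure.pi fun _ : Fin n => discreteMeasure P).real S = ∑ x ∈ S, prodP P n x := by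
  have := isProbabilityMeasure_discreteMeasure hP0 hP1
  rw [← sum_measureReal_singleton]
  refine sum_congr rfl fun x _ => ?_
  simp [measureReal_def, Measure.pi_singleton, discreteMeasure_singleton, prodP,
    ENNReal.toReal_prod, ENNReal.toReal_ofReal (hP0 _)]

end DiscreteMeasure

theorem sum_prodP_sum_ge_le {X : Type*} [Fintype X] {P : X → ℝ} (hP0 : ∀ x, 0 ≤ P x)
    (hP1 : ∑ x, P x = 1) {f : X → ℝ} {C : ℝ} (hf : ∀ x, 0 < P x → |f x| ≤ C) (n : ℕ)
    {r : ℝ} (hr : 0 ≤ r) :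
    ∑ x ∈ univ.filter (fun x : Fin n → X => r ≤ ∑ i, (∑ y, P y * f y - f (x i))), prodP P n x
      ≤ exp (-r ^ 2 / (2 * n * C ^ 2)) := by
  let _ : MeasurableSpace X := ⊤
  let μ := discreteMeasure P
  have := isProbabilityMeasure_discreteMeasure hP0 hP1
  let g : X → ℝ := fun y => ∑ y', P y' * f y' - f y
  have hg : HasSubgaussianMGF g ((‖C - -C‖₊ / 2) ^ 2) μ := by
    have h := (hasSubgaussianMGF_of_mem_Icc (X := f) (a := -C) (b := C) (μ := μ)
      Measurable.of_discrete.aemeasurable ((ae_discreteMeasure_iff hP0).2 fun x hx =>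
        abs_le.1 (hf x hx))).neg
    rw [integral_discreteMeasure hP0 hP1] at h
    convert h using 1
    ext y
    simp [g]
  have hcoord (i : Fin n) :
      HasSubgaussianMGF (g ∘ Function.eval i) ((‖C - -C‖₊ / 2) ^ 2) (Measure.pi fun _ => μ) :=
    .of_map (measurable_pi_apply i).aemeasurable
      (by rw [(measurePreserving_eval (fun _ => μ) i).map_eq]; exact hg)
  have hindep : iIndepFun (fun i => g ∘ Function.eval i) (Measure.pi fun _ : Fin n => μ) :=
    iIndepFun_pi fun _ => Measurable.of_discrete.aemeasurable
  have h := HasSubgaussianMGF.measure_sum_ge_le_of_iIndepFun hindep (s := univ)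
    (fun i _ => hcoord i) hr
  rw [← pi_discreteMeasure_real_finset hP0 hP1]
  convert h using 3
  · ext; simp [g]
  · push_cast
    simp only [sub_neg_eq_add, norm_eq_abs, div_pow, sq_abs, sum_const, card_univ,
      Fintype.card_fin, nsmul_eq_mul]
    ring

section LikelihoodRatio

variable {X : Type*} [Fintype X] {P Q : X → ℝ} {n : ℕ}

lemma abs_log_div_le_Cx (P Q : X → ℝ) (y : X) (hy : 0 < P y) :
    |log (P y / Q y)| ≤ Cx P Q :=
  le_ciSup (f := fun x : {x : X // 0 < P x} => |log (P x.1 / Q x.1)|)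
    (Set.finite_range _).bddAbove ⟨y, hy⟩

lemma sum_prodP (hP1 : ∑ x, P x = 1) : ∑ x : Fin n → X, prodP P n x = 1 := by
  simp [prodP, ← Fintype.prod_sum, hP1]

lemma pos_of_prodP_ne_zero (hP0 : ∀ x, 0 ≤ P x) {x : Fin n → X} (hx : prodP P n x ≠ 0)
    (i : Fin n) : 0 < P (x i) :=
  (hP0 _).lt_of_ne fun h => hx (prod_eq_zero (mem_univ i) h.symm)

lemma prodP_div_prodP_eq_exp_sum (hQ : ∀ y, 0 < P y → 0 < Q y) {x : Fin n → X}
    (hx : ∀ i, 0 < P (x i)) :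
    prodP P n x / prodP Q n x = exp (∑ i, log (P (x i) / Q (x i))) := by
  rw [exp_sum, prodP, prodP, ← prod_div_distrib]
  exact prod_congr rfl fun i _ => (exp_log (div_pos (hx i) (hQ _ (hx i)))).symm

/-- `B_{n,t}`. -/
noncomputable def likelihoodSet (P Q : X → ℝ) (n : ℕ) (t : ℝ) : Finset (Fin n → X) :=
  univ.filter fun x => exp (n * t) < prodP P n x / prodP Q n x

lemma likelihoodSet_eq_empty (hP0 : ∀ x, 0 ≤ P x) (hQ : ∀ y, 0 < P y → 0 < Q y) {t : ℝ}
    (ht : Cx P Q ≤ t) : likelihoodSet P Q n t = ∅ := by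
  refine filter_false_of_mem fun x _ => not_lt.2 ?_
  by_cases hx : prodP P n x = 0
  · rw [hx, zero_div]
    exact (exp_pos _).le
  have hpos := pos_of_prodP_ne_zero hP0 hx
  rw [prodP_div_prodP_eq_exp_sum hQ hpos, exp_le_exp]
  calc ∑ i, log (P (x i) / Q (x i)) ≤ ∑ _i : Fin n, t :=
        sum_le_sum fun i _ =>
          (le_abs_self _).trans ((abs_log_div_le_Cx P Q _ (hpos i)).trans ht)
    _ = n * t := by simp

variable [DecidableEq X]

/-- `P^n(B_{n,t}^c)`. -/
noncomputable def likelihoodTailMass (P Q : X → ℝ) (n : ℕ) (t : ℝ) : ℝ :=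
  ∑ x ∈ (likelihoodSet P Q n t)ᶜ, prodP P n x

lemma bddAbove_likelihoodTailMass_le (hP0 : ∀ x, 0 ≤ P x) (hP1 : ∑ x, P x = 1)
    (hQ : ∀ y, 0 < P y → 0 < Q y) {ε : ℝ} (hε : ε < 1) :
    BddAbove {t : ℝ | 0 < t ∧ likelihoodTailMass P Q n t ≤ ε} := by
  refine ⟨Cx P Q, fun t ⟨_, ht⟩ => le_of_not_ge fun hCt => ?_⟩
  rw [likelihoodTailMass, likelihoodSet_eq_empty hP0 hQ hCt, compl_empty,
    sum_prodP hP1] at ht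
  linarith

lemma likelihoodTailMass_le (hP0 : ∀ x, 0 ≤ P x) (hQ : ∀ y, 0 < P y → 0 < Q y) (t : ℝ) :
    likelihoodTailMass P Q n t ≤ ∑ x ∈ univ.filter (fun x : Fin n → X =>
      n * (KL P Q - t) ≤ ∑ i, (KL P Q - log (P (x i) / Q (x i)))), prodP P n x := by
  rw [likelihoodTailMass, ← sum_filter_ne_zero]
  refine sum_le_sum_of_subset_of_nonneg (fun x hx => ?_)
    fun x _ _ => prod_nonneg fun i _ => hP0 _
  simp only [mem_filter, mem_compl, likelihoodSet, mem_univ, true_and,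
    not_lt] at hx ⊢
  rw [prodP_div_prodP_eq_exp_sum hQ (pos_of_prodP_ne_zero hP0 hx.2), exp_le_exp] at hx
  simp only [sum_sub_distrib, sum_const, card_univ, Fintype.card_fin,
    nsmul_eq_mul]
  linarith [hx.1]

end LikelihoodRatio

theorem threshold_lower_bound_general
    {X : Type*} [Fintype X] [DecidableEq X] (P Q : X → ℝ)
    (hP0 : ∀ x, 0 ≤ P x) (hP1 : ∑ x, P x = 1)
    (hQ0 : ∀ x, 0 ≤ Q x)
    (hac : ∀ x, Q x = 0 → P x = 0)
    (n : ℕ) (hn : 1 ≤ n) (ε : ℝ) (hε0 : 0 < ε) (hε1 : ε < 1)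
    (hC : 0 < Cx P Q)
    (hpos : 0 < KL P Q - Cx P Q * Real.sqrt (2 * Real.log (1 / ε) / n)) :
    KL P Q - Cx P Q * Real.sqrt (2 * Real.log (1 / ε) / n)
      ≤ sSup {t : ℝ | 0 < t ∧
          (∑ x ∈ (univ.filter (fun x : Fin n → X =>
              Real.exp (n * t) < prodP P n x / prodP Q n x))ᶜ, prodP P n x) ≤ ε} := by
  set C := Cx P Q
  set δ := √(2 * log (1 / ε) / n)
  have hQ (y : X) (hy : 0 < P y) : 0 < Q y :=
    (hQ0 y).lt_of_ne fun h => hy.ne' (hac y h.symm)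
  have hn0 : (0 : ℝ) < n := by exact_mod_cast hn
  have hδsq : δ ^ 2 = 2 * log (1 / ε) / n :=
    sq_sqrt (div_nonneg (mul_nonneg zero_le_two (log_nonneg (one_le_one_div hε0 hε1.le))) hn0.le)
  refine le_csSup (bddAbove_likelihoodTailMass_le hP0 hP1 hQ hε1) ⟨hpos, ?_⟩
  calc likelihoodTailMass P Q n (KL P Q - C * δ)
      ≤ _ := likelihoodTailMass_le hP0 hQ _
    _ ≤ exp (-(n * (KL P Q - (KL P Q - C * δ))) ^ 2 / (2 * n * C ^ 2)) :=
      sum_prodP_sum_ge_le hP0 hP1 (abs_log_div_le_Cx P Q) n (by rw [sub_sub_cancel]; positivity)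
    _ = ε := by
      rw [← exp_log hε0, sub_sub_cancel, mul_pow, mul_pow, hδsq, one_div, log_inv]
      congr 1
      field_simp

theorem threshold_lower_bound
    {X : Type*} [Fintype X] [DecidableEq X] (P Q : X → ℝ)
    (hP0 : ∀ x, 0 ≤ P x) (hP1 : ∑ x, P x = 1)
    (hQ0 : ∀ x, 0 ≤ Q x) (hQ1 : ∑ x, Q x = 1)
    (hac : ∀ x, Q x = 0 → P x = 0)
    (n : ℕ) (hn : 1 ≤ n) (ε : ℝ) (hε0 : 0 < ε) (hε1 : ε < 1)
    (hC : 0 < Cx P Q)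
    (hpos : 0 < KL P Q - Cx P Q * Real.sqrt (2 * Real.log (1 / ε) / n)) :
    KL P Q - Cx P Q * Real.sqrt (2 * Real.log (1 / ε) / n)
      ≤ sSup {t : ℝ | 0 < t ∧
          (∑ x ∈ (univ.filter (fun x : Fin n → X =>
              Real.exp (n * t) < prodP P n x / prodP Q n x))ᶜ, prodP P n x) ≤ ε} :=
  threshold_lower_bound_general P Q hP0 hP1 hQ0 hac n hn ε hε0 hε1 hC hpos
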